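/- arXiv:2103.03097 — 2 statements merged into one kernel-verified Lean document; each statement's English description precedes it below -/
import Mathlib

section
/- Let P^s, P^t be probability distributions on X, h*^s, h*^t : X → [0,1] the true labeling functions on source and target, and h : X → [0,1] any classifier. If the disagreement ε_P(f,g) = E_{x∼P}|f(x)−g(x)| and d_1(P^s,P^t) = sup_{A measurable} |P^s(A) − P^t(A)| denotes total variation, and the functions involved are bounded by 1, then ε^t(h) ≤ ε^s(h) + 2·d_1(P^s, P^t) + E_{x∼P^s}[|h*^s(x) − h*^t(x)|], where ε^s(h) = ε_{P^s}(h, h*^s) and ε^t(h) = ε_{P^t}(h, h*^t). -/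
open MeasureTheory

/-- Total variation distance: sup over measurable sets of |P(A) − Q(A)|. -/
noncomputable def tv {X : Type*} [MeasurableSpace X] (P Q : Measure X) : ℝ :=
  ⨆ A : {A : Set X // MeasurableSet A}, |(P A.1).toReal - (Q A.1).toReal|

lemma tv_bddAbove {X : Type*} [MeasurableSpace X] (P Q : Measure X)
    [IsProbabilityMeasure P] [IsProbabilityMeasure Q] :
    BddAbove (Set.range fun A : {A : Set X // MeasurableSet A} =>
      |(P A.1).toReal - (Q A.1).toReal|) := by
  refine ⟨1, ?_⟩
  rintro x ⟨A, rfl⟩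
  have hP : (P A.1).toReal ≤ 1 := by
    have := prob_le_one (μ := P) (s := A.1)
    simpa using ENNReal.toReal_le_of_le_ofReal zero_le_one (by simpa using this)
  have hQ : (Q A.1).toReal ≤ 1 := by
    have := prob_le_one (μ := Q) (s := A.1)
    simpa using ENNReal.toReal_le_of_le_ofReal zero_le_one (by simpa using this)
  have h0P : 0 ≤ (P A.1).toReal := ENNReal.toReal_nonneg
  have h0Q : 0 ≤ (Q A.1).toReal := ENNReal.toReal_nonneg
  rw [abs_sub_le_iff]; constructor <;> linarith

lemma abs_meas_sub_le_tv {X : Type*} [MeasurableSpace X] (P Q : Measure X)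
    [IsProbabilityMeasure P] [IsProbabilityMeasure Q] {A : Set X} (hA : MeasurableSet A) :
    |(P A).toReal - (Q A).toReal| ≤ tv P Q :=
  le_ciSup (tv_bddAbove P Q) (⟨A, hA⟩ : {A : Set X // MeasurableSet A})

lemma tv_nonneg {X : Type*} [MeasurableSpace X] (P Q : Measure X)
    [IsProbabilityMeasure P] [IsProbabilityMeasure Q] : 0 ≤ tv P Q := by
  have := abs_meas_sub_le_tv P Q MeasurableSet.empty
  simpa using le_trans (abs_nonneg _) this

/-- Key lemma: for measurable f with values in [0,1],
`∫ f ∂Q - ∫ f ∂P ≤ tv P Q`. -/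
lemma integral_diff_le_tv {X : Type*} [MeasurableSpace X] (P Q : Measure X)
    [IsProbabilityMeasure P] [IsProbabilityMeasure Q] (f : X → ℝ) (mf : Measurable f)
    (bf : ∀ x, f x ∈ Set.Icc (0:ℝ) 1) :
    ∫ x, f x ∂Q - ∫ x, f x ∂P ≤ tv P Q := by
  have hnnP : 0 ≤ᵐ[P] f := Filter.Eventually.of_forall fun x => (bf x).1
  have hnnQ : 0 ≤ᵐ[Q] f := Filter.Eventually.of_forall fun x => (bf x).1
  have hbP : f ≤ᵐ[P] fun _ => (1:ℝ) := Filter.Eventually.of_forall fun x => (bf x).2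
  have hbQ : f ≤ᵐ[Q] fun _ => (1:ℝ) := Filter.Eventually.of_forall fun x => (bf x).2
  have intP : Integrable f P := by
    refine (integrable_const (1:ℝ)).mono' mf.aestronglyMeasurable ?_
    exact Filter.Eventually.of_forall fun x => by
      rw [Real.norm_eq_abs, abs_le]; exact ⟨by linarith [(bf x).1], (bf x).2⟩
  have intQ : Integrable f Q := by
    refine (integrable_const (1:ℝ)).mono' mf.aestronglyMeasurable ?_
    exact Filter.Eventually.of_forall fun x => by
      rw [Real.norm_eq_abs, abs_le]; exact ⟨by linarith [(bf x).1], (bf x).2⟩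
  rw [intP.integral_eq_integral_Ioc_meas_le hnnP hbP,
      intQ.integral_eq_integral_Ioc_meas_le hnnQ hbQ]
  -- the integrands as functions of t
  have meas_fun : ∀ (μ : Measure X), Measurable fun t : ℝ => (μ {a | t ≤ f a}).toReal := by
    intro μ
    refine Measurable.ennreal_toReal ?_
    exact Antitone.measurable fun s t hst => measure_mono fun a ha => le_trans hst ha
  have bdd_fun : ∀ (μ : Measure X) [IsProbabilityMeasure μ],
      Integrable (fun t : ℝ => (μ {a | t ≤ f a}).toReal) (volume.restrict (Set.Ioc 0 1)) := by
    intro μ _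
    refine (integrable_const (1:ℝ)).mono' (meas_fun μ).aestronglyMeasurable ?_
    refine Filter.Eventually.of_forall fun t => ?_
    rw [Real.norm_eq_abs, abs_of_nonneg ENNReal.toReal_nonneg]
    exact ENNReal.toReal_le_of_le_ofReal zero_le_one (by simpa using prob_le_one)
  simp only [measureReal_def]
  rw [← integral_sub (bdd_fun Q) (bdd_fun P)]
  calc ∫ t in Set.Ioc 0 1, ((Q {a | t ≤ f a}).toReal - (P {a | t ≤ f a}).toReal)
      ≤ ∫ _t in Set.Ioc (0:ℝ) 1, tv P Q := by
        refine integral_mono ((bdd_fun Q).sub (bdd_fun P)) (integrable_const _) fun t => ?_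
        have hA : MeasurableSet {a | t ≤ f a} := mf measurableSet_Ici
        have := abs_meas_sub_le_tv P Q hA
        calc (Q {a | t ≤ f a}).toReal - (P {a | t ≤ f a}).toReal
            ≤ |(Q {a | t ≤ f a}).toReal - (P {a | t ≤ f a}).toReal| := le_abs_self _
          _ = |(P {a | t ≤ f a}).toReal - (Q {a | t ≤ f a}).toReal| := abs_sub_comm _ _
          _ ≤ tv P Q := this
    _ = tv P Q := by
        rw [setIntegral_const]
        simp [Real.volume_Ioc]

/-- Ben-David et al. bound: ε^t(h) ≤ ε^s(h) + 2 d₁(P^s,P^t) + E_{P^s}|h*^s − h*^t|. -/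
theorem da_bound_tv {X : Type*} [MeasurableSpace X]
    (Ps Pt : Measure X) [IsProbabilityMeasure Ps] [IsProbabilityMeasure Pt]
    (h hs ht : X → ℝ) (mh : Measurable h) (mhs : Measurable hs) (mht : Measurable ht)
    (bh : ∀ x, h x ∈ Set.Icc (0:ℝ) 1) (bhs : ∀ x, hs x ∈ Set.Icc (0:ℝ) 1)
    (bht : ∀ x, ht x ∈ Set.Icc (0:ℝ) 1) :
    ∫ x, |h x - ht x| ∂Pt ≤
      (∫ x, |h x - hs x| ∂Ps) + 2 * tv Ps Pt + ∫ x, |hs x - ht x| ∂Ps := by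
  set f : X → ℝ := fun x => |h x - ht x| with hf
  have mf : Measurable f := (mh.sub mht).abs
  have bf : ∀ x, f x ∈ Set.Icc (0:ℝ) 1 := by
    intro x
    refine ⟨abs_nonneg _, ?_⟩
    rw [abs_sub_le_iff]
    constructor <;> [skip; skip] <;>
      · have := (bh x); have := (bht x); simp only [Set.mem_Icc] at *; linarith
  have key : ∫ x, f x ∂Pt - ∫ x, f x ∂Ps ≤ tv Ps Pt :=
    integral_diff_le_tv Ps Pt f mf bf
  -- triangle inequality under Ps
  have int_abs : ∀ (g : X → ℝ), Measurable g → (∀ x, |g x| ≤ 2) → Integrable g Ps := by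
    intro g mg bg
    exact (integrable_const (2:ℝ)).mono' mg.aestronglyMeasurable
      (Filter.Eventually.of_forall fun x => by rw [Real.norm_eq_abs]; exact bg x)
  have i1 : Integrable (fun x => |h x - hs x|) Ps := by
    refine int_abs _ (mh.sub mhs).abs fun x => ?_
    rw [abs_abs, abs_sub_le_iff]
    have := bh x; have := bhs x; simp only [Set.mem_Icc] at *
    constructor <;> linarith
  have i2 : Integrable (fun x => |hs x - ht x|) Ps := by
    refine int_abs _ (mhs.sub mht).abs fun x => ?_
    rw [abs_abs, abs_sub_le_iff]
    have := bhs x; have := bht x; simp only [Set.mem_Icc] at *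
    constructor <;> linarith
  have tri : ∫ x, f x ∂Ps ≤ (∫ x, |h x - hs x| ∂Ps) + ∫ x, |hs x - ht x| ∂Ps := by
    rw [← integral_add i1 i2]
    refine integral_mono (int_abs f mf fun x => by
      rw [abs_of_nonneg (abs_nonneg _)]; exact le_trans (bf x).2 one_le_two)
      (i1.add i2) fun x => ?_
    have : h x - ht x = (h x - hs x) + (hs x - ht x) := by ring
    simp only [hf]
    rw [this]
    exact abs_add_le _ _
  have htv : 0 ≤ tv Ps Pt := tv_nonneg Ps Pt
  have : ∫ x, f x ∂Pt ≤ ∫ x, f x ∂Ps + tv Ps Pt := by linarith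
  calc ∫ x, |h x - ht x| ∂Pt = ∫ x, f x ∂Pt := rfl
    _ ≤ ∫ x, f x ∂Ps + tv Ps Pt := this
    _ ≤ ((∫ x, |h x - hs x| ∂Ps) + ∫ x, |hs x - ht x| ∂Ps) + tv Ps Pt := by linarith
    _ ≤ (∫ x, |h x - hs x| ∂Ps) + 2 * tv Ps Pt + ∫ x, |hs x - ht x| ∂Ps := by linarith
end

section
/- Domain adaptation bound via H∆H-divergence: for any h ∈ H with h*^t ∈ H (or more generally, using the ideal joint risk λ_H = inf_{h'∈H} [ε^s(h') + ε^t(h')]), one has ε^t(h) ≤ ε^s(h) + d_{H∆H}(P^s, P^t) + λ_H, where risks are measured against true labeling functions h*^s and h*^t on the source and target respectively, and ε satisfies the triangle inequality. -/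
open MeasureTheory

/-- The H∆H-divergence between two distributions w.r.t. a hypothesis class H. -/
noncomputable def dHdH {X : Type*} [MeasurableSpace X] (H : Set (X → ℝ))
    (P Q : Measure X) : ℝ :=
  ⨆ p : H × H,
    abs ((∫ x, |p.1.1 x - p.2.1 x| ∂P) - ∫ x, |p.1.1 x - p.2.1 x| ∂Q)

lemma da_integrable {X : Type*} [MeasurableSpace X] (μ : Measure X)
    [IsProbabilityMeasure μ] (f g : X → ℝ)
    (hf : Measurable f) (hg : Measurable g)
    (hfb : ∀ x, f x ∈ Set.Icc (0:ℝ) 1) (hgb : ∀ x, g x ∈ Set.Icc (0:ℝ) 1) :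
    Integrable (fun x => |f x - g x|) μ := by
  refine ⟨((hf.sub hg).abs).aestronglyMeasurable, ?_⟩
  apply MeasureTheory.HasFiniteIntegral.of_bounded (C := (1:ℝ))
  filter_upwards with x
  simp only [Real.norm_eq_abs, abs_abs]
  rw [abs_sub_le_iff]
  constructor <;> linarith [(hfb x).1, (hfb x).2, (hgb x).1, (hgb x).2]

lemma da_int_bounds {X : Type*} [MeasurableSpace X] (μ : Measure X)
    [IsProbabilityMeasure μ] (f g : X → ℝ)
    (hf : Measurable f) (hg : Measurable g)
    (hfb : ∀ x, f x ∈ Set.Icc (0:ℝ) 1) (hgb : ∀ x, g x ∈ Set.Icc (0:ℝ) 1) :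
    (0:ℝ) ≤ (∫ x, |f x - g x| ∂μ) ∧ (∫ x, |f x - g x| ∂μ) ≤ 1 := by
  constructor
  · exact integral_nonneg fun x => abs_nonneg _
  · calc (∫ x, |f x - g x| ∂μ) ≤ ∫ _x, (1:ℝ) ∂μ := by
          apply integral_mono (da_integrable μ f g hf hg hfb hgb) (integrable_const 1)
          intro x
          simp only
          rw [abs_sub_le_iff]
          constructor <;> linarith [(hfb x).1, (hfb x).2, (hgb x).1, (hgb x).2]
      _ = 1 := by simp

/-- Domain adaptation bound via the H∆H-divergence and the ideal joint risk λ_H. -/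
theorem da_bound_dHdH {X : Type*} [MeasurableSpace X]
    (Ps Pt : Measure X) [IsProbabilityMeasure Ps] [IsProbabilityMeasure Pt]
    (H : Set (X → ℝ))
    (hH : ∀ h ∈ H, Measurable h ∧ ∀ x, h x ∈ Set.Icc (0:ℝ) 1)
    (hs ht : X → ℝ) (hhs : hs ∈ H) (hht : ht ∈ H)
    (h : X → ℝ) (hh : h ∈ H) :
    ∫ x, |h x - ht x| ∂Pt ≤
      (∫ x, |h x - hs x| ∂Ps) + dHdH H Ps Pt +
        ⨅ h' : H, ((∫ x, |h'.1 x - hs x| ∂Ps) + ∫ x, |h'.1 x - ht x| ∂Pt) := by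
  haveI hne : Nonempty H := ⟨⟨hs, hhs⟩⟩
  rw [← sub_le_iff_le_add']
  apply le_ciInf
  intro h'
  obtain ⟨hm, hb⟩ := hH h hh
  obtain ⟨h'm, h'b⟩ := hH h'.1 h'.2
  obtain ⟨hsm, hsb⟩ := hH hs hhs
  obtain ⟨htm, htb⟩ := hH ht hht
  -- step 1: triangle on Pt
  have step1 : ∫ x, |h x - ht x| ∂Pt ≤
      (∫ x, |h x - h'.1 x| ∂Pt) + ∫ x, |h'.1 x - ht x| ∂Pt := by
    rw [← integral_add (da_integrable Pt h h'.1 hm h'm hb h'b)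
      (da_integrable Pt h'.1 ht h'm htm h'b htb)]
    apply integral_mono (da_integrable Pt h ht hm htm hb htb)
      ((da_integrable Pt h h'.1 hm h'm hb h'b).add
        (da_integrable Pt h'.1 ht h'm htm h'b htb))
    intro x
    calc |h x - ht x| = |(h x - h'.1 x) + (h'.1 x - ht x)| := by ring_nf
      _ ≤ |h x - h'.1 x| + |h'.1 x - ht x| := abs_add_le _ _
  -- step 2: change measure via dHdH
  have step2 : ∫ x, |h x - h'.1 x| ∂Pt ≤ (∫ x, |h x - h'.1 x| ∂Ps) + dHdH H Ps Pt := by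
    have hbdd : BddAbove (Set.range fun p : H × H =>
        |(∫ x, |p.1.1 x - p.2.1 x| ∂Ps) - ∫ x, |p.1.1 x - p.2.1 x| ∂Pt|) := by
      refine ⟨1, ?_⟩
      rintro y ⟨p, rfl⟩
      obtain ⟨p1m, p1b⟩ := hH p.1.1 p.1.2
      obtain ⟨p2m, p2b⟩ := hH p.2.1 p.2.2
      obtain ⟨hs0, hs1⟩ := da_int_bounds Ps p.1.1 p.2.1 p1m p2m p1b p2b
      obtain ⟨ht0, ht1⟩ := da_int_bounds Pt p.1.1 p.2.1 p1m p2m p1b p2b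
      rw [abs_sub_le_iff]
      constructor <;> linarith
    have key : |(∫ x, |h x - h'.1 x| ∂Ps) - ∫ x, |h x - h'.1 x| ∂Pt| ≤ dHdH H Ps Pt :=
      le_ciSup hbdd (⟨⟨h, hh⟩, h'⟩ : H × H)
    have := abs_le.mp key
    linarith [this.1, this.2]
  -- step 3: triangle on Ps
  have step3 : ∫ x, |h x - h'.1 x| ∂Ps ≤
      (∫ x, |h x - hs x| ∂Ps) + ∫ x, |h'.1 x - hs x| ∂Ps := by
    rw [← integral_add (da_integrable Ps h hs hm hsm hb hsb)
      (da_integrable Ps h'.1 hs h'm hsm h'b hsb)]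
    apply integral_mono (da_integrable Ps h h'.1 hm h'm hb h'b)
      ((da_integrable Ps h hs hm hsm hb hsb).add
        (da_integrable Ps h'.1 hs h'm hsm h'b hsb))
    intro x
    calc |h x - h'.1 x| = |(h x - hs x) + (hs x - h'.1 x)| := by ring_nf
      _ ≤ |h x - hs x| + |hs x - h'.1 x| := abs_add_le _ _
      _ = |h x - hs x| + |h'.1 x - hs x| := by rw [abs_sub_comm (hs x)]
  linarith
end
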